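/- Characterization of the constrained proximal subproblem with quartic Bregman kernel (case h(x) = (a/4)‖x‖⁴ + (b/2)‖x‖² + 1 with a, b > 0): Let N ≥ 1, let D be an N × N real diagonal matrix with nonnegative diagonal entries, let G(φ) = (1/2)⟪φ, Dφ⟫, let e₁ be the first standard basis vector of ℝ^N, S = { φ ∈ ℝ^N : ⟪e₁, φ⟫ = 0 }, P₁ = I − e₁e₁ᵀ, α > 0, v ∈ ℝ^N, ψ ∈ S, and let a, b > 0. Then the function φ ↦ G(φ) + ⟪v, φ − ψ⟫ + (1/α)·D_h(φ, ψ) attains a unique minimizer φ* over S, and φ* satisfies φ* = (αD + (a‖φ*‖² + b)·I)⁻¹ ( (a‖ψ‖² + b)ψ − α P₁ v ), where (a‖ψ‖² + b)ψ = ∇h(ψ). -/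

import Mathlib

open scoped RealInnerProductSpace

/-!
Write `c = ∇h(ψ) - α P₁ v`. The minimizer solves the stationarity equation
`(α d i + a t + b) φ* i = c i` with `t = ‖φ*‖²`; such a solution exists because `t` only has to
be a fixed point of the continuous antitone map `t ↦ ∑ i, (c i / (α d i + a t + b))²` on `[0, ∞)`
(intermediate value theorem). By the three-point identity for Bregman divergences, for `φ ∈ S`,
`α (F φ - F φ*)` is the stationarity residual paired with `φ - φ*` (zero, since the residual is a
multiple of `e₁` and `φ - φ*` lies in `S`), plus `(α/2) ∑ d i (φ i - φ* i)² ≥ 0`, plus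
`D_h(φ, φ*) ≥ (b/2)‖φ - φ*‖²`. This quadratic growth gives both minimality and uniqueness.
-/

/-- The objective `φ ↦ G(φ) + ⟪v, φ − ψ⟫ + (1/α)·D_h(φ, ψ)` of the constrained proximal
subproblem with quartic Bregman kernel `h(x) = (a/4)‖x‖⁴ + (b/2)‖x‖² + 1`, where
`G(φ) = (1/2)⟪φ, Dφ⟫` with `D = diag(d)` and `∇h(ψ) = (a‖ψ‖² + b)ψ`. -/
noncomputable def objQuartic (N : ℕ) (d : Fin N → ℝ) (α a b : ℝ)
    (v ψ φ : EuclideanSpace ℝ (Fin N)) : ℝ :=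
  (1 / 2) * ∑ i, d i * φ i ^ 2 + ⟪v, φ - ψ⟫ +
    (1 / α) * ((a / 4 * ‖φ‖ ^ 4 + b / 2 * ‖φ‖ ^ 2 + 1)
      - (a / 4 * ‖ψ‖ ^ 4 + b / 2 * ‖ψ‖ ^ 2 + 1)
      - ⟪(a * ‖ψ‖ ^ 2 + b) • ψ, φ - ψ⟫)

section Bregman

variable {E : Type*} [NormedAddCommGroup E] [InnerProductSpace ℝ E]

def bregmanDiv (h : E → ℝ) (gradh : E → E) (x y : E) : ℝ :=
  h x - h y - ⟪gradh y, x - y⟫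

theorem bregmanDiv_sub_bregmanDiv (h : E → ℝ) (gradh : E → E) (x y z : E) :
    bregmanDiv h gradh x z - bregmanDiv h gradh y z =
      bregmanDiv h gradh x y + ⟪gradh y - gradh z, x - y⟫ := by
  simp only [bregmanDiv, inner_sub_left, inner_sub_right]
  ring

noncomputable def quarticKernel (a b : ℝ) (x : E) : ℝ :=
  a / 4 * ‖x‖ ^ 4 + b / 2 * ‖x‖ ^ 2 + 1

def quarticKernelGrad (a b : ℝ) (x : E) : E :=
  (a * ‖x‖ ^ 2 + b) • x

theorem norm_pow_four_add_mul_inner_sub_le (x y : E) :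
    ‖y‖ ^ 4 + 4 * ‖y‖ ^ 2 * ⟪y, x - y⟫ ≤ ‖x‖ ^ 4 := by
  -- after Cauchy–Schwarz: `‖x‖⁴ - 4‖x‖‖y‖³ + 3‖y‖⁴` is the product below
  have hxy : ⟪y, x⟫ ≤ ‖y‖ * ‖x‖ := real_inner_le_norm y x
  have hfactor : 0 ≤ (‖x‖ - ‖y‖) ^ 2 * (‖x‖ ^ 2 + 2 * ‖x‖ * ‖y‖ + 3 * ‖y‖ ^ 2) := by
    have := norm_nonneg x
    have := norm_nonneg y
    positivity
  rw [inner_sub_right, real_inner_self_eq_norm_sq]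
  nlinarith [mul_le_mul_of_nonneg_left hxy (sq_nonneg ‖y‖)]

theorem half_mul_norm_sub_sq_le_bregmanDiv_quarticKernel {a : ℝ} (ha : 0 ≤ a) (b : ℝ)
    (x y : E) :
    b / 2 * ‖x - y‖ ^ 2 ≤ bregmanDiv (quarticKernel a b) (quarticKernelGrad a b) x y := by
  have hquartic := norm_pow_four_add_mul_inner_sub_le x y
  have hsq : ‖x - y‖ ^ 2 = ‖x‖ ^ 2 - 2 * ⟪x, y⟫ + ‖y‖ ^ 2 := norm_sub_sq_real x y
  simp only [bregmanDiv, quarticKernel, quarticKernelGrad, inner_smul_left, inner_sub_right,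
    real_inner_self_eq_norm_sq, RCLike.conj_to_real] at hquartic ⊢
  rw [hsq, real_inner_comm y x]
  nlinarith [mul_le_mul_of_nonneg_left hquartic ha]

end Bregman

theorem Finset.sum_mul_mul_sub_le_half_sum_mul_sq_sub {ι : Type*} (s : Finset ι) {d : ι → ℝ}
    (hd : ∀ i ∈ s, 0 ≤ d i) (x y : ι → ℝ) :
    ∑ i ∈ s, d i * y i * (x i - y i) ≤
      1 / 2 * ∑ i ∈ s, d i * x i ^ 2 - 1 / 2 * ∑ i ∈ s, d i * y i ^ 2 := by
  calc ∑ i ∈ s, d i * y i * (x i - y i)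
      ≤ ∑ i ∈ s, (1 / 2 * (d i * x i ^ 2) - 1 / 2 * (d i * y i ^ 2)) :=
        Finset.sum_le_sum fun i hi => by nlinarith [mul_nonneg (hd i hi) (sq_nonneg (x i - y i))]
    _ = 1 / 2 * ∑ i ∈ s, d i * x i ^ 2 - 1 / 2 * ∑ i ∈ s, d i * y i ^ 2 := by
        rw [Finset.mul_sum, Finset.mul_sum, Finset.sum_sub_distrib]

theorem exists_fixedPoint_of_antitoneOn {g : ℝ → ℝ} (hcont : ContinuousOn g (Set.Ici 0))
    (hanti : AntitoneOn g (Set.Ici 0)) (hg0 : 0 ≤ g 0) : ∃ t, 0 ≤ t ∧ g t = t := by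
  have hcont' : ContinuousOn (fun t => g t - t) (Set.Icc 0 (g 0)) :=
    (hcont.mono Set.Icc_subset_Ici_self).sub continuousOn_id
  have hle : g (g 0) ≤ g 0 := hanti (Set.mem_Ici.mpr le_rfl) hg0 hg0
  obtain ⟨t, ht, hzero⟩ := intermediate_value_Icc' hg0 hcont'
    (show (0 : ℝ) ∈ Set.Icc (g (g 0) - g 0) (g 0 - 0) from ⟨by linarith, by linarith⟩)
  exact ⟨t, ht.1, sub_eq_zero.mp hzero⟩

theorem EuclideanSpace.exists_forall_eq_inv_mul_norm_sq {ι : Type*} [Fintype ι] {p : ι → ℝ}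
    (hp : ∀ i, 0 ≤ p i) {a b : ℝ} (ha : 0 ≤ a) (hb : 0 < b) (c : ι → ℝ) :
    ∃ x : EuclideanSpace ℝ ι, ∀ i, x i = (p i + (a * ‖x‖ ^ 2 + b))⁻¹ * c i := by
  have hden : ∀ t, 0 ≤ t → ∀ i, 0 < p i + (a * t + b) := fun t ht i => by
    have := hp i; positivity
  set g : ℝ → ℝ := fun t => ∑ i, ((p i + (a * t + b))⁻¹ * c i) ^ 2
  have hcont : ContinuousOn g (Set.Ici 0) := by
    refine continuousOn_finsetSum _ fun i _ => ContinuousOn.pow (ContinuousOn.mul ?_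
      continuousOn_const) 2
    exact ContinuousOn.inv₀ (by fun_prop) fun t ht => (hden t ht i).ne'
  have hanti : AntitoneOn g (Set.Ici 0) := fun s hs t _ hst =>
    Finset.sum_le_sum fun i _ => by
      have := hden s hs i
      rw [inv_mul_eq_div, inv_mul_eq_div, div_pow, div_pow]
      gcongr
  obtain ⟨t, ht, hfix⟩ := exists_fixedPoint_of_antitoneOn hcont hanti (by positivity)
  set x : EuclideanSpace ℝ ι := WithLp.toLp 2 fun i => (p i + (a * t + b))⁻¹ * c i
  have hnorm : ‖x‖ ^ 2 = t := by rw [EuclideanSpace.real_norm_sq_eq, ← hfix]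
  exact ⟨x, fun i => by rw [hnorm]⟩

theorem objQuartic_eq_bregmanDiv (N : ℕ) (d : Fin N → ℝ) (α a b : ℝ)
    (v ψ φ : EuclideanSpace ℝ (Fin N)) :
    objQuartic N d α a b v ψ φ = 1 / 2 * ∑ i, d i * φ i ^ 2 + ⟪v, φ - ψ⟫ +
      1 / α * bregmanDiv (quarticKernel a b) (quarticKernelGrad a b) φ ψ :=
  rfl

theorem objQuartic_add_le_of_stationary {N : ℕ} {d : Fin N → ℝ} (hd : ∀ i, 0 ≤ d i) {α : ℝ}
    (hα : 0 < α) {a : ℝ} (ha : 0 ≤ a) (b : ℝ) (v ψ : EuclideanSpace ℝ (Fin N)) {i₀ : Fin N}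
    {φs : EuclideanSpace ℝ (Fin N)}
    (hstat : ∀ i, (α * d i + (a * ‖φs‖ ^ 2 + b)) * φs i =
      (a * ‖ψ‖ ^ 2 + b) * ψ i - α * (v i - if i = i₀ then v i₀ else 0))
    (hφs : φs i₀ = 0) {φ : EuclideanSpace ℝ (Fin N)} (hφ : φ i₀ = 0) :
    objQuartic N d α a b v ψ φs + b / (2 * α) * ‖φ - φs‖ ^ 2 ≤ objQuartic N d α a b v ψ φ := by
  have hv : ⟪v, φ - ψ⟫ - ⟪v, φs - ψ⟫ = ⟪v, φ - φs⟫ := by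
    rw [← inner_sub_right, sub_sub_sub_cancel_right]
  have hdiff : objQuartic N d α a b v ψ φ - objQuartic N d α a b v ψ φs =
      (1 / 2 * ∑ i, d i * φ i ^ 2 - 1 / 2 * ∑ i, d i * φs i ^ 2) + ⟪v, φ - φs⟫ +
        1 / α * (bregmanDiv (quarticKernel a b) (quarticKernelGrad a b) φ φs +
          ⟪quarticKernelGrad a b φs - quarticKernelGrad a b ψ, φ - φs⟫) := by
    rw [objQuartic_eq_bregmanDiv, objQuartic_eq_bregmanDiv, ← hv,
      ← bregmanDiv_sub_bregmanDiv]
    ring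
  have hlin : ∑ i, d i * φs i * (φ i - φs i) + ⟪v, φ - φs⟫ +
      1 / α * ⟪quarticKernelGrad a b φs - quarticKernelGrad a b ψ, φ - φs⟫ = 0 := by
    simp only [quarticKernelGrad, PiLp.inner_apply, PiLp.sub_apply, PiLp.smul_apply, smul_eq_mul,
      RCLike.inner_apply, conj_trivial, Finset.mul_sum, ← Finset.sum_add_distrib]
    refine Finset.sum_eq_zero fun i _ => ?_
    by_cases hi : i = i₀
    · rw [hi, hφ, hφs]
      ring
    · have hstat_i := hstat i
      rw [if_neg hi, sub_zero] at hstat_i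
      field_simp
      linear_combination (φ i - φs i) * hstat_i
  have hG := Finset.univ.sum_mul_mul_sub_le_half_sum_mul_sq_sub (fun i _ => hd i) (φ ·) (φs ·)
  have hB := mul_le_mul_of_nonneg_left
    (half_mul_norm_sub_sq_le_bregmanDiv_quarticKernel ha b φ φs) (one_div_nonneg.mpr hα.le)
  have hscale : b / (2 * α) * ‖φ - φs‖ ^ 2 = 1 / α * (b / 2 * ‖φ - φs‖ ^ 2) := by ring
  linarith

/-- Characterization of the constrained proximal subproblem with quartic Bregman kernel:
the objective attains a unique minimizer `φ*` over `S = {φ : ⟪e₁, φ⟫ = 0}`, and `φ*`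
satisfies `φ* = (αD + (a‖φ*‖² + b)I)⁻¹((a‖ψ‖² + b)ψ − αP₁v)`. -/
theorem stmt11 (N : ℕ) (hN : 0 < N)
    (d : Fin N → ℝ) (hd : ∀ i, 0 ≤ d i)
    (α : ℝ) (hα : 0 < α) (a b : ℝ) (ha : 0 < a) (hb : 0 < b)
    (v ψ : EuclideanSpace ℝ (Fin N)) (hψ : ψ ⟨0, hN⟩ = 0) :
    ∃ φstar : EuclideanSpace ℝ (Fin N),
      φstar ⟨0, hN⟩ = 0 ∧
      (∀ φ : EuclideanSpace ℝ (Fin N), φ ⟨0, hN⟩ = 0 →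
        objQuartic N d α a b v ψ φstar ≤ objQuartic N d α a b v ψ φ) ∧
      (∀ φ' : EuclideanSpace ℝ (Fin N), φ' ⟨0, hN⟩ = 0 →
        (∀ φ : EuclideanSpace ℝ (Fin N), φ ⟨0, hN⟩ = 0 →
          objQuartic N d α a b v ψ φ' ≤ objQuartic N d α a b v ψ φ) →
        φ' = φstar) ∧
      (∀ i : Fin N, φstar i = (α * d i + (a * ‖φstar‖ ^ 2 + b))⁻¹ *
        ((a * ‖ψ‖ ^ 2 + b) * ψ i
          - α * (v i - (if i = ⟨0, hN⟩ then v ⟨0, hN⟩ else 0)))) := by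
  obtain ⟨φs, hφs⟩ := EuclideanSpace.exists_forall_eq_inv_mul_norm_sq
    (fun i => mul_nonneg hα.le (hd i)) ha.le hb
    fun i => (a * ‖ψ‖ ^ 2 + b) * ψ i - α * (v i - if i = ⟨0, hN⟩ then v ⟨0, hN⟩ else 0)
  have hφs₀ : φs ⟨0, hN⟩ = 0 := by simp [hφs, hψ]
  have hstat : ∀ i, (α * d i + (a * ‖φs‖ ^ 2 + b)) * φs i =
      (a * ‖ψ‖ ^ 2 + b) * ψ i - α * (v i - if i = ⟨0, hN⟩ then v ⟨0, hN⟩ else 0) := fun i => by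
    have : 0 < α * d i + (a * ‖φs‖ ^ 2 + b) := by have := hd i; positivity
    rw [hφs i, mul_inv_cancel_left₀ this.ne']
  have hgrowth := fun (φ : EuclideanSpace ℝ (Fin N)) (hφ : φ ⟨0, hN⟩ = 0) =>
    objQuartic_add_le_of_stationary hd hα ha.le b v ψ hstat hφs₀ hφ
  refine ⟨φs, hφs₀, fun φ hφ => ?_, fun φ hφ hmin => ?_, hφs⟩
  · exact (le_add_of_nonneg_right (by positivity)).trans (hgrowth φ hφ)
  · have hnorm : ‖φ - φs‖ ^ 2 ≤ 0 := by
      nlinarith [hgrowth φ hφ, hmin φs hφs₀, div_pos hb (mul_pos two_pos hα)]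
    exact sub_eq_zero.mp (norm_eq_zero.mp
      ((pow_eq_zero_iff two_ne_zero).mp (le_antisymm hnorm (sq_nonneg _))))
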